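/- arXiv:1206.1835 — 5 statements merged into one kernel-verified Lean document; each statement's English description precedes it below -/
import Mathlib

section
/- Let A = ℚ[t̄][L̄_1,...,L̄_{2r}] graded with deg t̄ = 2 and deg L̄_j = 1, and let I be the ideal generated by {L̄_j² − t̄ : 1 ≤ j ≤ 2r}. Then the images in A/I of the elementary symmetric polynomials s̄_0, s̄_1, ..., s̄_{2r} in the L̄_j generate a free ℚ[t̄]-submodule of rank 2r+1. -/
/-!
Specialise `t̄ ↦ X²` and `L̄_j ↦ ε_j X` for a sign vector `ε ∈ {±1}^{2r}`: this kills `I`, and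
sends `s̄_k` to `e_k(ε) X^k`. A relation `∑ f_k(t̄) s̄_k ∈ I` therefore gives
`∑_k e_k(ε) f_k(X²) X^k = 0` for every sign vector `ε`. Splitting off the first sign,
`e_•(±1, ε') = e_•(ε') ± e_{•-1}(ε')`, so by induction on the number of signs all coefficients
`f_k(X²) X^k` vanish, hence all `f_k` do.
-/

open MvPolynomial
open scoped Polynomial

namespace Multiset

variable {R : Type*} [CommSemiring R]

theorem esymm_eq_zero_of_card_lt {s : Multiset R} {k : ℕ} (h : card s < k) : s.esymm k = 0 := by
  simp [esymm, powersetCard_eq_empty _ h]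

theorem esymm_cons_succ (a : R) (s : Multiset R) (k : ℕ) :
    (a ::ₘ s).esymm (k + 1) = s.esymm (k + 1) + a * s.esymm k := by
  simp [esymm, map_map, sum_map_mul_left]

@[simp]
theorem esymm_zero (s : Multiset R) : s.esymm 0 = 1 := by
  simp [esymm]

variable {M : Type*} [AddCommMonoid M] [Module R M]

theorem sum_esymm_cons_smul {n : ℕ} (a : R) {s : Multiset R} (hs : card s = n)
    (c : Fin (n + 2) → M) :
    ∑ k : Fin (n + 2), (a ::ₘ s).esymm k • c k =
      ∑ k : Fin (n + 1), s.esymm k • c k.castSucc +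
        a • ∑ k : Fin (n + 1), s.esymm k • c k.succ := by
  have hlast : s.esymm (n + 1) = 0 := esymm_eq_zero_of_card_lt (by omega)
  have hsum_castSucc : ∑ k : Fin (n + 1), s.esymm k • c k.castSucc =
      c 0 + ∑ k : Fin (n + 1), s.esymm (k + 1) • c k.succ := by
    calc ∑ k : Fin (n + 1), s.esymm k • c k.castSucc
        = ∑ k : Fin (n + 2), s.esymm k • c k := by
          simp [Fin.sum_univ_castSucc (n := n + 1), hlast]
      _ = _ := by simp [Fin.sum_univ_succ]
  rw [Fin.sum_univ_succ, hsum_castSucc]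
  simp only [Fin.val_zero, Fin.val_succ, esymm_cons_succ, esymm_zero, add_smul, mul_smul,
    Finset.sum_add_distrib, Finset.smul_sum]
  rw [one_smul, ← add_assoc]

end Multiset

open Finset in
theorem eq_zero_of_sum_esymm_smul_eq_zero_of_signs {R M : Type*} [CommRing R] [AddCommGroup M]
    [Module R M] [IsAddTorsionFree M] {n : ℕ} {c : Fin (n + 1) → M}
    (h : ∀ ε : Fin n → R, (∀ j, ε j = 1 ∨ ε j = -1) →
      ∑ k : Fin (n + 1), (univ.val.map ε).esymm k • c k = 0) (k : Fin (n + 1)) :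
    c k = 0 := by
  induction n with
  | zero => simpa [Fin.fin_one_eq_zero k] using h finZeroElim finZeroElim
  | succ n ih =>
    have hsplit : ∀ ε : Fin n → R, (∀ j, ε j = 1 ∨ ε j = -1) →
        ∑ k : Fin (n + 1), (univ.val.map ε).esymm k • c k.castSucc = 0 ∧
          ∑ k : Fin (n + 1), (univ.val.map ε).esymm k • c k.succ = 0 := by
      intro ε hε
      set A := ∑ k : Fin (n + 1), (univ.val.map ε).esymm k • c k.castSucc
      set B := ∑ k : Fin (n + 1), (univ.val.map ε).esymm k • c k.succ
      have hcons (a : R) (ha : a = 1 ∨ a = -1) : A + a • B = 0 := by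
        have hmap : univ.val.map (Fin.cons a ε : Fin (n + 1) → R) = a ::ₘ univ.val.map ε := by
          simp [List.ofFn_succ]
        rw [← Multiset.sum_esymm_cons_smul a (by simp), ← hmap]
        exact h _ (Fin.cases ha hε)
      have hplus : A + B = 0 := by simpa using hcons 1 (Or.inl rfl)
      have hminus : A - B = 0 := by simpa [sub_eq_add_neg] using hcons (-1) (Or.inr rfl)
      constructor
      · rw [← two_nsmul_eq_zero, two_nsmul]
        linear_combination (norm := abel) hplus + hminus
      · rw [← two_nsmul_eq_zero, two_nsmul]
        linear_combination (norm := abel) hplus - hminus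
    cases k using Fin.cases with
    | zero => exact ih (fun ε hε => (hsplit ε hε).1) 0
    | succ k => exact ih (c := fun k => c k.succ) (fun ε hε => (hsplit ε hε).2) k

section SignEval

variable {R σ : Type*} [CommSemiring R]

noncomputable def signEval (ε : σ → R[X]) : MvPolynomial σ R[X] →+* R[X] :=
  eval₂Hom (Polynomial.expand R 2 : R[X] →+* R[X]) fun j => Polynomial.X * ε j

@[simp]
theorem signEval_C (ε : σ → R[X]) (p : R[X]) : signEval ε (C p) = Polynomial.expand R 2 p :=
  eval₂Hom_C _ _ _

theorem signEval_esymm [Fintype σ] (ε : σ → R[X]) (k : ℕ) :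
    signEval ε (esymm σ R[X] k) = Polynomial.X ^ k * (Finset.univ.val.map ε).esymm k := by
  rw [← smul_eq_mul, Multiset.pow_smul_esymm, Multiset.map_map, Finset.esymm_map_val]
  simp [signEval, esymm, map_sum, map_prod]

end SignEval

theorem span_sq_sub_le_ker_signEval {R σ : Type*} [CommRing R] (ε : σ → R[X])
    (hε : ∀ j, ε j ^ 2 = 1) :
    Ideal.span {q | ∃ j, q = X j ^ 2 - C Polynomial.X} ≤ RingHom.ker (signEval ε) := by
  rw [Ideal.span_le]
  rintro _ ⟨j, rfl⟩
  simp [signEval, mul_pow, hε]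

theorem esymm_images_linearIndependent_general (r : ℕ)
    (I : Ideal (MvPolynomial (Fin (2 * r)) (Polynomial ℚ)))
    (hI : I = Ideal.span
      {q | ∃ j : Fin (2 * r), q = X j ^ 2 - C Polynomial.X}) :
    LinearIndependent (Polynomial ℚ)
      (fun k : Fin (2 * r + 1) =>
        Ideal.Quotient.mk I (esymm (Fin (2 * r)) (Polynomial ℚ) (k : ℕ))) := by
  rw [Fintype.linearIndependent_iff]
  intro f hf
  have hmem : ∑ k : Fin (2 * r + 1), C (f k) * esymm (Fin (2 * r)) ℚ[X] k ∈ I := by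
    rw [← Ideal.Quotient.eq_zero_iff_mem, ← hf]
    simp only [map_sum, ← smul_eq_C_mul]
    rfl
  have hcoeff :
      ∀ k : Fin (2 * r + 1), Polynomial.expand ℚ 2 (f k) * Polynomial.X ^ (k : ℕ) = 0 := by
    refine eq_zero_of_sum_esymm_smul_eq_zero_of_signs (R := ℚ[X]) fun ε hε => ?_
    have hsq : ∀ j, ε j ^ 2 = 1 := fun j => by rcases hε j with h | h <;> simp [h]
    have hker := span_sq_sub_le_ker_signEval ε hsq (hI ▸ hmem)
    rw [RingHom.mem_ker, map_sum] at hker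
    rw [← hker]
    refine Finset.sum_congr rfl fun k _ => ?_
    rw [map_mul, signEval_C, signEval_esymm, smul_eq_mul]
    ring
  intro k
  simpa [Polynomial.expand_eq_zero two_pos] using hcoeff k

/-- In `A = ℚ[t̄][L̄_1,...,L̄_{2r}]` modulo the ideal `I` generated by the
`L̄_j² − t̄`, the images of the elementary symmetric polynomials
`s̄_0, ..., s̄_{2r}` are linearly independent over `ℚ[t̄]`; hence they generate
a free `ℚ[t̄]`-submodule of rank `2r+1`. -/
theorem esymm_images_linearIndependent (r : ℕ) (hr : 1 ≤ r)
    (I : Ideal (MvPolynomial (Fin (2 * r)) (Polynomial ℚ)))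
    (hI : I = Ideal.span
      {q | ∃ j : Fin (2 * r), q = X j ^ 2 - C Polynomial.X}) :
    LinearIndependent (Polynomial ℚ)
      (fun k : Fin (2 * r + 1) =>
        Ideal.Quotient.mk I (esymm (Fin (2 * r)) (Polynomial ℚ) (k : ℕ))) :=
  esymm_images_linearIndependent_general r I hI
end

section
/- Let A = ℚ[t̄][L̄_1,...,L̄_{2r}] and I the ideal generated by {L̄_j² − t̄}. In A/I, every symmetric polynomial in L̄_1,...,L̄_{2r} (i.e., every element of the image of symmetric polynomials) is a ℚ[t̄]-linear combination of the images of s̄_0, s̄_1, ..., s̄_{2r}. -/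
/-!
Modulo the relations `X i ^ 2 = t`, every monomial `X ^ d` equals
`t ^ (∑ ⌊d i / 2⌋) • X ^ (d % 2)`. This normal form is linear over `ℚ[t]` and commutes with
permuting the variables, so it sends a symmetric polynomial to a symmetric multilinear one. A
symmetric multilinear polynomial is `∑ₖ cₖ eₖ`, where `cₖ` is its common coefficient on the
squarefree monomials of degree `k`.
-/

open MvPolynomial Finset

namespace Finsupp

variable {σ τ : Type*}

theorem sum_single_one_injective :
    Function.Injective fun s : Finset σ => ∑ i ∈ s, single i 1 := by
  intro s t h
  have := congrArg toMultiset h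
  simp only [toMultiset_sum_single, one_nsmul] at this
  exact Finset.val_injective this

theorem exists_sum_single_one_eq {d : σ →₀ ℕ} (hd : ∀ i, d i ≤ 1) :
    ∃ s : Finset σ, ∑ i ∈ s, single i 1 = d := by
  classical
  refine ⟨d.support, ext fun i => ?_⟩
  have := hd i
  simp only [finsetSum_apply, single_apply, Finset.sum_ite_eq', mem_support_iff]
  split_ifs <;> omega

theorem mapDomain_sum_single_one (e : σ ≃ τ) (s : Finset σ) :
    mapDomain e (∑ i ∈ s, single i 1) = ∑ i ∈ s.map e.toEmbedding, single i 1 := by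
  simp [mapDomain_finsetSum, mapDomain_single]

end Finsupp

namespace MvPolynomial

variable {σ R : Type*} [CommSemiring R]

theorem IsSymmetric.coeff_sum_single_one_eq {p : MvPolynomial σ R} (hp : p.IsSymmetric)
    {s t : Finset σ} (h : #s = #t) :
    coeff (∑ i ∈ s, Finsupp.single i 1) p = coeff (∑ i ∈ t, Finsupp.single i 1) p := by
  obtain ⟨e, rfl⟩ := Equiv.Perm.exists_map_finset_eq s t h
  rw [← Finsupp.mapDomain_sum_single_one, ← coeff_rename_mapDomain _ e.injective, hp e]

section Multilinear

variable [Fintype σ] {p : MvPolynomial σ R}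

theorem eq_sum_monomial_of_mem_restrictDegree_one (hp : p ∈ restrictDegree σ R 1) :
    p = ∑ s : Finset σ,
      monomial (∑ i ∈ s, Finsupp.single i 1) (coeff (∑ i ∈ s, Finsupp.single i 1) p) := by
  classical
  calc p = ∑ d ∈ p.support, monomial d (coeff d p) := p.support_sum_monomial_coeff.symm
    _ = ∑ d ∈ univ.image fun s : Finset σ => ∑ i ∈ s, Finsupp.single i 1,
          monomial d (coeff d p) := by
      refine Finset.sum_subset (fun d hd => ?_) (fun d _ hd => ?_)
      · obtain ⟨s, rfl⟩ :=
          Finsupp.exists_sum_single_one_eq ((mem_restrictDegree _ _ _).1 hp d hd)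
        exact mem_image_of_mem _ (mem_univ s)
      · rw [notMem_support_iff.1 hd, monomial_zero]
    _ = _ := Finset.sum_image Finsupp.sum_single_one_injective.injOn

theorem IsSymmetric.sum_powersetCard_monomial_mem_span_esymm (hp : p.IsSymmetric) (k : ℕ) :
    ∑ s ∈ powersetCard k univ,
        monomial (∑ i ∈ s, Finsupp.single i 1) (coeff (∑ i ∈ s, Finsupp.single i 1) p) ∈
      R ∙ esymm σ R k := by
  rcases (powersetCard k (univ : Finset σ)).eq_empty_or_nonempty with h | ⟨s₀, hs₀⟩
  · simp [h]
  refine Submodule.mem_span_singleton.2 ⟨coeff (∑ i ∈ s₀, Finsupp.single i 1) p, ?_⟩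
  rw [esymm_eq_sum_monomial, Finset.smul_sum]
  refine Finset.sum_congr rfl fun s hs => ?_
  rw [smul_monomial, smul_eq_mul, mul_one,
    hp.coeff_sum_single_one_eq ((mem_powersetCard.1 hs₀).2.trans (mem_powersetCard.1 hs).2.symm)]

theorem IsSymmetric.mem_span_esymm (hp : p.IsSymmetric) (hp₁ : p ∈ restrictDegree σ R 1) :
    p ∈ Submodule.span R (Set.range fun k : Fin (Fintype.card σ + 1) => esymm σ R k) := by
  classical
  have hcard : ∀ s ∈ (univ : Finset (Finset σ)), #s ∈ range (Fintype.card σ + 1) :=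
    fun s _ => mem_range_succ_iff.2 (card_le_univ s)
  rw [eq_sum_monomial_of_mem_restrictDegree_one hp₁, ← sum_fiberwise_of_maps_to hcard,
    ← Fin.sum_univ_eq_sum_range]
  refine Submodule.sum_mem _ fun k _ => ?_
  rw [← powerset_univ, ← powersetCard_eq_filter]
  exact Submodule.span_mono (Set.singleton_subset_iff.2 (Set.mem_range_self k))
    (hp.sum_powersetCard_monomial_mem_span_esymm k)

end Multilinear

section ReduceSquares

variable {τ : Type*} (a : R)

/-- The normal form modulo the relations `X i ^ 2 = C a`. -/
noncomputable def reduceSquares : MvPolynomial σ R →ₗ[R] MvPolynomial σ R :=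
  (basisMonomials σ R).constr R fun d =>
    monomial (d.mapRange (· % 2) (Nat.zero_mod 2)) (a ^ d.sum fun _ e => e / 2)

theorem reduceSquares_monomial (d : σ →₀ ℕ) (c : R) :
    reduceSquares a (monomial d c) =
      monomial (d.mapRange (· % 2) (Nat.zero_mod 2)) (c * a ^ d.sum fun _ e => e / 2) := by
  calc reduceSquares a (monomial d c) = c • reduceSquares a (basisMonomials σ R d) := by
        rw [coe_basisMonomials, ← map_smul, smul_monomial, smul_eq_mul, mul_one]
    _ = _ := by rw [reduceSquares, Module.Basis.constr_basis, smul_monomial, smul_eq_mul]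

theorem reduceSquares_mem_restrictDegree (p : MvPolynomial σ R) :
    reduceSquares a p ∈ restrictDegree σ R 1 := by
  induction p using MvPolynomial.induction_on' with
  | monomial d c =>
    rw [reduceSquares_monomial, restrictDegree, monomial_mem_restrictSupport]
    exact Or.inl fun i => Nat.le_of_lt_succ (Nat.mod_lt _ two_pos)
  | add p q hp hq => rw [map_add]; exact add_mem hp hq

theorem rename_reduceSquares (e : σ ≃ τ) (p : MvPolynomial σ R) :
    rename e (reduceSquares a p) = reduceSquares a (rename e p) := by
  induction p using MvPolynomial.induction_on' with
  | monomial d c =>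
    rw [reduceSquares_monomial, rename_monomial, rename_monomial, reduceSquares_monomial,
      Finsupp.sum_mapDomain_index_inj e.injective]
    congr 2
    ext i
    simp [Finsupp.mapDomain_equiv_apply]
  | add p q hp hq => simp only [map_add, hp, hq]

theorem IsSymmetric.reduceSquares {p : MvPolynomial σ R} (hp : p.IsSymmetric) :
    (reduceSquares a p).IsSymmetric := fun e => by
  rw [rename_reduceSquares, hp e]

theorem map_reduceSquares {S : Type*} [CommSemiring S] (f : MvPolynomial σ R →+* S)
    (hf : ∀ i, f (X i) ^ 2 = f (C a)) (p : MvPolynomial σ R) :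
    f (reduceSquares a p) = f p := by
  induction p using MvPolynomial.induction_on' with
  | monomial d c =>
    have hpow : ∀ i e, f (X i) ^ e = f (C a) ^ (e / 2) * f (X i) ^ (e % 2) := fun i e => by
      rw [← hf, ← pow_mul, ← pow_add, Nat.div_add_mod]
    rw [reduceSquares_monomial, monomial_eq, monomial_eq, C_mul, C_pow, map_mul, map_mul, map_mul,
      map_pow, map_finsuppProd, map_finsuppProd, Finsupp.prod_mapRange_index (by simp)]
    simp only [map_pow]
    conv_rhs => rw [Finsupp.prod_congr (g2 := fun i e => f (C a) ^ (e / 2) * f (X i) ^ (e % 2))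
      fun i _ => hpow i (d i), Finsupp.prod_mul]
    simp only [Finsupp.prod, Finsupp.sum, ← Finset.prod_pow_eq_pow_sum]
    ring
  | add p q hp hq => simp only [map_add, hp, hq]

end ReduceSquares

end MvPolynomial

open MvPolynomial in
theorem symmetric_image_mem_span_esymm_general (r : ℕ)
    (I : Ideal (MvPolynomial (Fin (2 * r)) (Polynomial ℚ)))
    (hI : I = Ideal.span
      {q | ∃ j : Fin (2 * r), q = X j ^ 2 - C Polynomial.X}) :
    ∀ p : MvPolynomial (Fin (2 * r)) (Polynomial ℚ), p.IsSymmetric →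
      Ideal.Quotient.mk I p ∈
        Submodule.span (Polynomial ℚ)
          (Set.range fun k : Fin (2 * r + 1) =>
            Ideal.Quotient.mk I (esymm (Fin (2 * r)) (Polynomial ℚ) (k : ℕ))) := by
  intro p hp
  have hX : ∀ j, Ideal.Quotient.mk I (X j) ^ 2 = Ideal.Quotient.mk I (C Polynomial.X) := by
    intro j
    rw [← map_pow, Ideal.Quotient.mk_eq_mk_iff_sub_mem, hI]
    exact Ideal.subset_span ⟨j, rfl⟩
  have hred := (hp.reduceSquares Polynomial.X).mem_span_esymm
    (reduceSquares_mem_restrictDegree _ p)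
  rw [Fintype.card_fin] at hred
  have hmk : Ideal.Quotient.mk I (reduceSquares Polynomial.X p) = Ideal.Quotient.mk I p :=
    map_reduceSquares (S := _ ⧸ I) Polynomial.X (Ideal.Quotient.mk I) hX p
  rw [← hmk, ← Ideal.Quotient.mkₐ_eq_mk (Polynomial ℚ), Set.range_comp']
  exact Submodule.apply_mem_span_image_of_mem_span
    (Ideal.Quotient.mkₐ (Polynomial ℚ) I).toLinearMap hred

/-- In `A = ℚ[t̄][L̄_1,...,L̄_{2r}]` modulo the ideal `I` generated by the
`L̄_j² − t̄`, the image of every symmetric polynomial in the `L̄_j` is a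
`ℚ[t̄]`-linear combination of the images of `s̄_0, ..., s̄_{2r}`. -/
theorem symmetric_image_mem_span_esymm (r : ℕ) (hr : 1 ≤ r)
    (I : Ideal (MvPolynomial (Fin (2 * r)) (Polynomial ℚ)))
    (hI : I = Ideal.span
      {q | ∃ j : Fin (2 * r), q = X j ^ 2 - C Polynomial.X}) :
    ∀ p : MvPolynomial (Fin (2 * r)) (Polynomial ℚ), p.IsSymmetric →
      Ideal.Quotient.mk I p ∈
        Submodule.span (Polynomial ℚ)
          (Set.range fun k : Fin (2 * r + 1) =>
            Ideal.Quotient.mk I (esymm (Fin (2 * r)) (Polynomial ℚ) (k : ℕ))) :=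
  symmetric_image_mem_span_esymm_general r I hI
end

section
/- Let ā, x̄ be elements of a commutative ℚ-algebra satisfying ā^{2r} + 2x̄·ā^{2r−1} = 0 (r ≥ 1). Then for any formal power series identity f(y) = g_1(y²) + y·g_2(y²) with f(y) = ((e^y−1)/y)^{2r−1}, applied as polynomials truncated appropriately in a ring where ā is nilpotent of order ≤ 4r, one has ā^{2r−1}·f(ā) = ā^{2r−1}·(g_1(4x̄²) − 2x̄·g_2(4x̄²)). -/
open PowerSeries

/-- Substitution of `X^2` into a formal power series: `(substSq f)(y) = f(y²)`. -/
noncomputable def substSq (f : PowerSeries ℚ) : PowerSeries ℚ :=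
  PowerSeries.mk fun n => if 2 ∣ n then PowerSeries.coeff (n / 2) f else 0

/-! With `b = a^(2r-1)` the relation says `b * a = b * (-2x)`, so `b * p(a) = b * p(-2x)` for
every polynomial `p`, and `b * (-2x)^n = b * a^n = 0` once `n ≥ 2r + 1`. Hence all truncations of
`f` past degree `2r` agree after multiplication by `b`; truncating at `2(2r+1)` and splitting `f`
into even and odd parts evaluates `g₁` and `g₂` at `(-2x)^2 = 4x^2`. -/

open Polynomial in
theorem mul_aeval_eq_of_mul_eq {R A : Type*} [CommSemiring R] [CommRing A] [Algebra R A]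
    {a b c : A} (h : b * a = b * c) (p : R[X]) : b * aeval a p = b * aeval c p := by
  obtain ⟨q, hq⟩ := sub_dvd_eval_sub a c (p.map (algebraMap R A))
  rw [← sub_eq_zero, ← mul_sub, aeval_def, aeval_def, eval₂_eq_eval_map, eval₂_eq_eval_map, hq,
    ← mul_assoc, mul_sub, h, sub_self, zero_mul]

open Polynomial in
theorem mul_aeval_trunc_eq_of_mul_pow_eq_zero {R A : Type*} [CommRing R] [CommRing A]
    [Algebra R A] {b c : A} {N : ℕ} (hc : b * c ^ N = 0) {M : ℕ} (hNM : N ≤ M) (f : R⟦X⟧) :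
    b * aeval c (trunc M f) = b * aeval c (trunc N f) := by
  have hdvd : (X : R[X]) ^ N ∣ trunc M f - trunc N f := by
    refine X_pow_dvd_iff.mpr fun d hd => ?_
    rw [coeff_sub, coeff_trunc, coeff_trunc, if_pos hd, if_pos (hd.trans_le hNM), sub_self]
  obtain ⟨q, hq⟩ := hdvd
  rw [← sub_eq_zero, ← mul_sub, ← map_sub, hq, map_mul, map_pow, aeval_X, ← mul_assoc, hc,
    zero_mul]

theorem coeff_substSq (g : PowerSeries ℚ) (d : ℕ) :
    coeff d (substSq g) = if 2 ∣ d then coeff (d / 2) g else 0 :=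
  coeff_mk _ _

theorem trunc_two_mul_substSq (g : PowerSeries ℚ) (n : ℕ) :
    trunc (2 * n) (substSq g) = Polynomial.expand ℚ 2 (trunc n g) := by
  ext d
  simp only [coeff_trunc, Polynomial.coeff_expand two_pos, coeff_substSq]
  grind

theorem trunc_two_mul_X_mul_substSq (g : PowerSeries ℚ) (n : ℕ) :
    trunc (2 * n) (X * substSq g) = Polynomial.X * Polynomial.expand ℚ 2 (trunc n g) := by
  ext d
  rcases d with _ | d
  · simp [coeff_trunc]
  simp only [Polynomial.coeff_X_mul, coeff_trunc, coeff_succ_X_mul,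
    Polynomial.coeff_expand two_pos, coeff_substSq]
  grind

/-- Let `ā, x̄` be elements of a commutative `ℚ`-algebra with
`ā^{2r} + 2x̄ ā^{2r−1} = 0` and `ā` nilpotent of order `≤ 4r`.  If
`f(y) = ((e^y−1)/y)^{2r−1}` decomposes as `f(y) = g₁(y²) + y·g₂(y²)`, then,
applying the power series as suitably truncated polynomials, one has
`ā^{2r−1}·f(ā) = ā^{2r−1}·(g₁(4x̄²) − 2x̄·g₂(4x̄²))`. -/
theorem a_pow_mul_series_eval (A : Type*) [CommRing A] [Algebra ℚ A]
    (r : ℕ) (hr : 1 ≤ r) (a x : A)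
    (hrel : a ^ (2 * r) + 2 * x * a ^ (2 * r - 1) = 0)
    (hnil : a ^ (4 * r) = 0)
    (g₁ g₂ : PowerSeries ℚ)
    (hg : (PowerSeries.mk fun k => ((k + 1).factorial : ℚ)⁻¹) ^ (2 * r - 1) =
      substSq g₁ + X * substSq g₂) :
    a ^ (2 * r - 1) *
      Polynomial.aeval a
        (trunc (4 * r)
          ((PowerSeries.mk fun k => ((k + 1).factorial : ℚ)⁻¹) ^ (2 * r - 1))) =
    a ^ (2 * r - 1) *
      (Polynomial.aeval (4 * x ^ 2) (trunc (2 * r + 1) g₁)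
        - 2 * x * Polynomial.aeval (4 * x ^ 2) (trunc (2 * r + 1) g₂)) := by
  set b := a ^ (2 * r - 1)
  have hba : b * a = b * (-2 * x) := by
    rw [← pow_succ, Nat.sub_add_cancel (by omega)]
    linear_combination hrel
  have hvanish : b * (-2 * x) ^ (2 * r + 1) = 0 := by
    have hsemi : SemiconjBy b a (-2 * x) := by rw [SemiconjBy, hba, mul_comm]
    rw [mul_comm, ← (hsemi.pow_right _).eq, ← pow_add,
      show 2 * r - 1 + (2 * r + 1) = 4 * r by omega, hnil]
  set F := (PowerSeries.mk fun k => ((k + 1).factorial : ℚ)⁻¹) ^ (2 * r - 1)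
  calc b * Polynomial.aeval a (trunc (4 * r) F)
      = b * Polynomial.aeval (-2 * x) (trunc (4 * r) F) := mul_aeval_eq_of_mul_eq hba _
    _ = b * Polynomial.aeval (-2 * x) (trunc (2 * r + 1) F) :=
      mul_aeval_trunc_eq_of_mul_pow_eq_zero hvanish (by omega) F
    _ = b * Polynomial.aeval (-2 * x) (trunc (2 * (2 * r + 1)) F) :=
      (mul_aeval_trunc_eq_of_mul_pow_eq_zero hvanish (by omega) F).symm
    _ = _ := by
      rw [hg, map_add, trunc_two_mul_substSq, trunc_two_mul_X_mul_substSq, map_add, map_mul,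
        Polynomial.expand_aeval, Polynomial.expand_aeval, Polynomial.aeval_X,
        show (-2 * x) ^ 2 = 4 * x ^ 2 by ring]
      ring
end

section
/- Let M be the 2×2 matrix over ℚ[[t]] given by M = [[g₁(4t), −2g₂(4t)], [q(t)g₁(4t) − 2t·p(t)g₂(4t), p(t)g₁(4t) − 2q(t)g₂(4t)]], where p(t) = sinh(√t)/√t, q(t) = cosh(√t), and g₁, g₂ are as in the even/odd decomposition of ((e^y−1)/y)^{2r−1}. Then det M = p(t)^{4r−1}. -/
/-!
Write `E(y) = (e^y - 1)/y`, so that the hypothesis reads `E(y)^(2r-1) = g₁(y²) + y g₂(y²)`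
and hence `(E(y) E(-y))^(2r-1) = g₁(y²)² - y² g₂(y²)²`. On the other hand
`y² E(y) E(-y) = e^y + e^(-y) - 2 = (e^(y/2) - e^(-y/2))²`, i.e. `E(y) E(-y) = p(y²/4)²`.
Putting `y² = 4t` gives `g₁(4t)² - 4t g₂(4t)² = p(t)^(2(2r-1))`, and the determinant
expands to `p(t) (g₁(4t)² - 4t g₂(4t)²)`.
-/

open PowerSeries

namespace PowerSeries

variable {R : Type*} [CommRing R]

theorem expand_injective (p : ℕ) (hp : p ≠ 0) :
    Function.Injective (expand p hp : R⟦X⟧ → R⟦X⟧) := fun f g h => by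
  ext n
  simpa using congrArg (coeff (p * n)) h

theorem rescale_expand (p : ℕ) (hp : p ≠ 0) (c : R) (f : R⟦X⟧) :
    rescale c (expand p hp f) = expand p hp (rescale (c ^ p) f) := by
  ext n
  simp only [coeff_rescale, coeff_expand]
  split_ifs with h
  · obtain ⟨k, rfl⟩ := h
    rw [Nat.mul_div_cancel_left _ (Nat.pos_of_ne_zero hp), pow_mul]
  · rw [mul_zero]

theorem expand_add_X_mul_expand_mul_rescale_neg_one (a b : R⟦X⟧) :
    (expand 2 two_ne_zero a + X * expand 2 two_ne_zero b) *
        rescale (-1) (expand 2 two_ne_zero a + X * expand 2 two_ne_zero b) =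
      expand 2 two_ne_zero (a ^ 2 - X * b ^ 2) := by
  simp only [map_add, map_mul, map_sub, map_pow, rescale_expand, rescale_neg_one_X, expand_X,
    neg_one_sq, rescale_one, RingHom.id_apply]
  ring

end PowerSeries

theorem substSq_eq_expand (f : ℚ⟦X⟧) : substSq f = expand 2 two_ne_zero f := by
  ext n
  simp [substSq, coeff_expand]

noncomputable def expSubOneDivX : ℚ⟦X⟧ :=
  mk fun k => ((k + 1).factorial : ℚ)⁻¹

noncomputable def sinhSqrtDivSqrt : ℚ⟦X⟧ :=
  mk fun k => ((2 * k + 1).factorial : ℚ)⁻¹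

theorem X_mul_expSubOneDivX : X * expSubOneDivX = exp ℚ - 1 := by
  ext (_ | n)
  · simp
  · simp [expSubOneDivX, coeff_succ_X_mul, Nat.factorial]

theorem exp_sub_rescale_neg_one_exp :
    exp ℚ - rescale (-1) (exp ℚ) = 2 * X * expand 2 two_ne_zero sinhSqrtDivSqrt := by
  ext (_ | n) <;> rw [mul_assoc, ← map_ofNat C 2, coeff_C_mul]
  · rw [map_sub, coeff_rescale]
    simp
  · rw [coeff_succ_X_mul, coeff_expand]
    rcases Nat.even_or_odd' n with ⟨k, rfl | rfl⟩
    · simp [sinhSqrtDivSqrt, coeff_rescale, pow_succ]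
      ring
    · simp [coeff_rescale, pow_succ]

/-- Rescaling by `2` turns `(e^(y/2) - e^(-y/2))²` into `(e^y - e^(-y))²`, avoiding halves. -/
theorem rescale_two_expSubOneDivX_mul_rescale_neg_one :
    rescale 2 (expSubOneDivX * rescale (-1) expSubOneDivX) =
      expand 2 two_ne_zero sinhSqrtDivSqrt ^ 2 := by
  set E := expSubOneDivX
  set S : ℚ⟦X⟧ := exp ℚ
  set T : ℚ⟦X⟧ := rescale (-1) S with hT
  have hE : X * E = S - 1 := X_mul_expSubOneDivX
  have hE' : X * rescale (-1) E = 1 - T := by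
    have h := congrArg (rescale (-1 : ℚ)) hE
    rw [map_mul, rescale_neg_one_X, map_sub, map_one, ← hT] at h
    linear_combination -h
  have hST : S * T = 1 := exp_mul_exp_neg_eq_one
  have hS2 : S ^ 2 = rescale 2 S := by simpa using exp_pow_eq_rescale_exp (A := ℚ) 2
  have hT2 : T ^ 2 = rescale 2 T := by
    rw [hT, ← map_pow, hS2, rescale_rescale, rescale_rescale, mul_comm]
  have h4 : (4 : ℚ⟦X⟧) ≠ 0 :=
    ne_of_apply_ne constantCoeff (by rw [map_ofNat, map_zero]; norm_num)
  have h4X2 : (4 * X ^ 2 : ℚ⟦X⟧) ≠ 0 := mul_ne_zero h4 (pow_ne_zero _ X_ne_zero)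
  refine mul_left_cancel₀ h4X2 ?_
  calc 4 * X ^ 2 * rescale 2 (E * rescale (-1) E)
      = rescale 2 (X ^ 2 * (E * rescale (-1) E)) := by
        simp only [map_mul, map_pow, rescale_X, map_ofNat]
        ring
    _ = rescale 2 (S + T - 2) := by
        congr 1
        linear_combination (X * rescale (-1) E) * hE + (S - 1) * hE' - hST
    _ = (S - T) ^ 2 := by
        rw [map_sub, map_add, map_ofNat, ← hS2, ← hT2]
        linear_combination 2 * hST
    _ = 4 * X ^ 2 * expand 2 two_ne_zero sinhSqrtDivSqrt ^ 2 := by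
        rw [exp_sub_rescale_neg_one_exp]
        ring

theorem rescale_four_sq_sub_four_X_mul_sq (n : ℕ) (a b : ℚ⟦X⟧)
    (h : expSubOneDivX ^ n = expand 2 two_ne_zero a + X * expand 2 two_ne_zero b) :
    rescale 4 a ^ 2 - 4 * X * rescale 4 b ^ 2 = sinhSqrtDivSqrt ^ (2 * n) := by
  apply expand_injective 2 two_ne_zero
  calc expand 2 two_ne_zero (rescale 4 a ^ 2 - 4 * X * rescale 4 b ^ 2)
      = rescale 2 (expand 2 two_ne_zero (a ^ 2 - X * b ^ 2)) := by
        simp only [rescale_expand, map_sub, map_mul, map_pow, rescale_X, expand_X, map_ofNat]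
        rw [show (2 : ℚ) ^ 2 = 4 by norm_num]
        ring
    _ = rescale 2 ((expSubOneDivX * rescale (-1) expSubOneDivX) ^ n) := by
        rw [← expand_add_X_mul_expand_mul_rescale_neg_one, ← h, map_pow, mul_pow]
    _ = expand 2 two_ne_zero (sinhSqrtDivSqrt ^ (2 * n)) := by
        rw [map_pow, rescale_two_expSubOneDivX_mul_rescale_neg_one, pow_mul, map_pow, map_pow]

theorem det_M_eq_p_pow_general (r : ℕ) (hr : 1 ≤ r)
    (p q : PowerSeries ℚ)
    (hp : p = PowerSeries.mk fun k => ((2 * k + 1).factorial : ℚ)⁻¹)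
    (g₁ g₂ : PowerSeries ℚ)
    (hg : (PowerSeries.mk fun k => ((k + 1).factorial : ℚ)⁻¹) ^ (2 * r - 1) =
      substSq g₁ + X * substSq g₂) :
    Matrix.det
      !![rescale 4 g₁, -2 * rescale 4 g₂;
         q * rescale 4 g₁ - 2 * X * p * rescale 4 g₂,
         p * rescale 4 g₁ - 2 * q * rescale 4 g₂] =
      p ^ (4 * r - 1) := by
  have hkey : rescale 4 g₁ ^ 2 - 4 * X * rescale 4 g₂ ^ 2 = p ^ (2 * (2 * r - 1)) := by
    rw [hp]
    rw [substSq_eq_expand, substSq_eq_expand] at hg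
    exact rescale_four_sq_sub_four_X_mul_sq _ g₁ g₂ hg
  rw [Matrix.det_fin_two_of, show 4 * r - 1 = 2 * (2 * r - 1) + 1 by omega, pow_succ']
  linear_combination p * hkey

/-- With `p(t) = Σ t^k/(2k+1)!`, `q(t) = Σ t^k/(2k)!`, and `g₁, g₂` the even/odd
parts of `((e^y−1)/y)^{2r−1}`, the matrix
`M = [[g₁(4t), −2g₂(4t)], [q g₁(4t) − 2t p g₂(4t), p g₁(4t) − 2q g₂(4t)]]`
has determinant `p(t)^{4r−1}`. -/
theorem det_M_eq_p_pow (r : ℕ) (hr : 1 ≤ r)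
    (p q : PowerSeries ℚ)
    (hp : p = PowerSeries.mk fun k => ((2 * k + 1).factorial : ℚ)⁻¹)
    (hq : q = PowerSeries.mk fun k => ((2 * k).factorial : ℚ)⁻¹)
    (g₁ g₂ : PowerSeries ℚ)
    (hg : (PowerSeries.mk fun k => ((k + 1).factorial : ℚ)⁻¹) ^ (2 * r - 1) =
      substSq g₁ + X * substSq g₂) :
    Matrix.det
      !![rescale 4 g₁, -2 * rescale 4 g₂;
         q * rescale 4 g₁ - 2 * X * p * rescale 4 g₂,
         p * rescale 4 g₁ - 2 * q * rescale 4 g₂] =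
      p ^ (4 * r - 1) :=
  det_M_eq_p_pow_general r hr p q hp g₁ g₂ hg
end

section
/- Consider the (2r−1)×(2r+1) matrix over ℤ[v] whose (i,j) entries (1 ≤ i ≤ 2r−1, 0 ≤ j ≤ 2r) are 1 if j = i−1, v if j = i, 1 if j = i+1, and 0 otherwise (the matrix of i* on elementary symmetric polynomials). Then its kernel, as a ℤ[v]-module map ℤ[v]^{2r+1} → ℤ[v]^{2r−1}, is a free ℤ[v]-module of rank 2. -/
/-!
A vector `x` lies in the kernel exactly when `x i + v * x (i+1) + x (i+2) = 0` for every row `i`.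
Since the coefficient of `x (i+2)` is `1`, this three-term recurrence can be solved forward from
any pair of initial values, and the solution is unique; so `x ↦ (x 0, x 1)` identifies the kernel
with `ℤ[v]²`, whatever the number of rows.
-/

variable {R : Type*} [CommRing R] (v : R)

def recurrenceSeq (a b : R) : ℕ → R
  | 0 => a
  | 1 => b
  | n + 2 => -(recurrenceSeq a b n + v * recurrenceSeq a b (n + 1))

theorem recurrenceSeq_add_mul_add (a b : R) (n : ℕ) :
    recurrenceSeq v a b n + v * recurrenceSeq v a b (n + 1) + recurrenceSeq v a b (n + 2) = 0 := by
  rw [recurrenceSeq, add_neg_cancel]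

namespace Matrix

def recurrenceMatrix (m k : ℕ) : Matrix (Fin m) (Fin k) R :=
  Matrix.of fun i j =>
    if (j : ℕ) = i then 1 else if (j : ℕ) = i + 1 then v else if (j : ℕ) = i + 2 then 1 else 0

theorem recurrenceMatrix_mulVec_apply {m : ℕ} (x : Fin (m + 2) → R) (i : Fin m) :
    (recurrenceMatrix v m (m + 2) *ᵥ x) i =
      x ⟨i, by omega⟩ + v * x ⟨i + 1, by omega⟩ + x ⟨i + 2, by omega⟩ := by
  have hrow : (fun j => recurrenceMatrix v m (m + 2) i j) =
      Pi.single ⟨i, by omega⟩ 1 + Pi.single ⟨i + 1, by omega⟩ v + Pi.single ⟨i + 2, by omega⟩ 1 := by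
    funext j
    simp only [recurrenceMatrix, of_apply, Pi.add_apply, Pi.single_apply, Fin.ext_iff]
    split_ifs <;> first | omega | simp
  simp only [mulVec, hrow, add_dotProduct, single_dotProduct, one_mul]

theorem mem_ker_recurrenceMatrix_iff {m : ℕ} {x : Fin (m + 2) → R} :
    x ∈ LinearMap.ker (recurrenceMatrix v m (m + 2)).mulVecLin ↔
      ∀ n (h : n < m), x ⟨n, by omega⟩ + v * x ⟨n + 1, by omega⟩ + x ⟨n + 2, by omega⟩ = 0 := by
  simp only [LinearMap.mem_ker, mulVecLin_apply, funext_iff, recurrenceMatrix_mulVec_apply,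
    Pi.zero_apply, Fin.forall_iff]

theorem eq_zero_of_mem_ker_recurrenceMatrix {m : ℕ} {x : Fin (m + 2) → R}
    (hx : x ∈ LinearMap.ker (recurrenceMatrix v m (m + 2)).mulVecLin) (h0 : x 0 = 0)
    (h1 : x 1 = 0) : x = 0 := by
  rw [mem_ker_recurrenceMatrix_iff] at hx
  suffices ∀ n (h : n < m + 2), x ⟨n, h⟩ = 0 ∧ ∀ h' : n + 1 < m + 2, x ⟨n + 1, h'⟩ = 0 by
    funext j
    exact (this j j.isLt).1
  intro n
  induction n with
  | zero => exact fun _ => ⟨h0, fun _ => h1⟩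
  | succ n ih =>
    intro h
    obtain ⟨hn, hn1⟩ := ih (by omega)
    refine ⟨hn1 h, fun h' => ?_⟩
    have := hx n (by omega)
    rwa [hn, hn1 h, mul_zero, zero_add, zero_add] at this

theorem recurrenceSeq_mem_ker_recurrenceMatrix (m : ℕ) (a b : R) :
    (fun j : Fin (m + 2) => recurrenceSeq v a b j) ∈
      LinearMap.ker (recurrenceMatrix v m (m + 2)).mulVecLin :=
  (mem_ker_recurrenceMatrix_iff v).2 fun n _ => recurrenceSeq_add_mul_add v a b n

def kerRecurrenceMatrixEquiv (m : ℕ) :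
    LinearMap.ker (recurrenceMatrix v m (m + 2)).mulVecLin ≃ₗ[R] (Fin 2 → R) where
  toFun x := ![x.1 0, x.1 1]
  map_add' x y := by ext i; fin_cases i <;> rfl
  map_smul' c x := by ext i; fin_cases i <;> rfl
  invFun c := ⟨_, recurrenceSeq_mem_ker_recurrenceMatrix v m (c 0) (c 1)⟩
  left_inv x := by
    refine Subtype.ext (sub_eq_zero.1 (eq_zero_of_mem_ker_recurrenceMatrix v
      (sub_mem (recurrenceSeq_mem_ker_recurrenceMatrix v m _ _) x.2) ?_ ?_)) <;> simp [recurrenceSeq]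
  right_inv c := by ext i; fin_cases i <;> rfl

noncomputable def kerRecurrenceMatrixBasis {m k : ℕ} (hk : m + 2 = k) :
    Module.Basis (Fin 2) R (LinearMap.ker (recurrenceMatrix v m k).mulVecLin) := by
  subst hk
  exact (Pi.basisFun R (Fin 2)).map (kerRecurrenceMatrixEquiv v m).symm

end Matrix

/-- The `(2r−1) × (2r+1)` matrix over `ℤ[v]` with entries `1, v, 1` along three
adjacent diagonals (the matrix of `i*` on elementary symmetric polynomials,
`v` an indeterminate) has kernel a free `ℤ[v]`-module of rank `2`. -/
theorem kernel_free_of_rank_two (r : ℕ) (hr : 1 ≤ r)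
    (M : Matrix (Fin (2 * r - 1)) (Fin (2 * r + 1)) (Polynomial ℤ))
    (hM : M = Matrix.of fun (i : Fin (2 * r - 1)) (j : Fin (2 * r + 1)) =>
      if (j : ℕ) = (i : ℕ) then 1
      else if (j : ℕ) = (i : ℕ) + 1 then Polynomial.X
      else if (j : ℕ) = (i : ℕ) + 2 then 1
      else 0) :
    Nonempty (Module.Basis (Fin 2) (Polynomial ℤ)
      (LinearMap.ker (Matrix.mulVecLin M))) :=
  hM ▸ ⟨Matrix.kerRecurrenceMatrixBasis Polynomial.X (by omega)⟩
end
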